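/- arXiv:2504.09025 — 5 statements merged into one kernel-verified Lean document; each statement's English description precedes it below -/
import Mathlib

section
/- Fix real numbers σ_X > 0, σ_S > 0, θ₁ ≠ 0 with θ₁² < σ_S²·σ_X², a real number h, and a real number μ_X. Write ρ² = θ₁²/(σ_S²·σ_X²) and K(C) = (σ_S²·σ_X⁴/θ₁²)·(1 − exp(2·(C − h))). Let C and D be real numbers with h + (1/2)·log(1 − ρ²) < C ≤ h and D ≥ σ_X² − K(C). Then the infimum, over all triples (μ̂ ∈ ℝ, σ̂ > 0, θ₂ ∈ ℝ) satisfying θ₂² < σ_X²·σ̂², (μ_X − μ̂)² + σ_X² + σ̂² − 2·θ₂ ≤ D, and −(1/2)·log(1 − (θ₁²/(σ_S²·σ_X⁴))·(θ₂²/σ̂²)) ≥ h − C, of the quantity −(1/2)·log(1 − θ₂²/(σ_X²·σ̂²)), equals −(1/2)·log(1 − (1/ρ²)·(1 − exp(2·(C − h)))). -/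
open Real Set Filter Topology

/-!
Write `s = θ₂² / (σX² σ̂²)` for the squared correlation of `X` and `X̂`. The rate is
`-(1/2) log (1 - s)`, increasing in `s`, and by the Markov chain `S ↔ X ↔ X̂` the squared
correlation of `S` and `X̂` is `ρ² s`, so the classification constraint reads `s ≥ q` with
`q = (1 - exp (2 (C - h))) / ρ²`. The rate is therefore at least its value at `q`. Conversely,
every `s ∈ (q, 1)` is realised by `μ̂ = μX`, `σ̂² = σX² s`, `θ₂ = σX² s` at distortion
`σX² (1 - s) ≤ D`; letting `s ↓ q` gives the infimum, which is not attained when `q = 0`.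
-/

theorem isGLB_of_image_Ioo_subset {α β : Type*} [TopologicalSpace α] [LinearOrder α]
    [OrderTopology α] [DenselyOrdered α] [NoMaxOrder α]
    [TopologicalSpace β] [Preorder β] [ClosedIciTopology β]
    {f : α → β} {S : Set β} {a b : α} (hab : a < b) (hf : ContinuousWithinAt f (Ioi a) a)
    (hlow : f a ∈ lowerBounds S) (hsub : f '' Ioo a b ⊆ S) : IsGLB S (f a) :=
  ⟨hlow, fun _ hL => ge_of_tendsto hf <| eventually_of_mem (Ioo_mem_nhdsGT hab)
    fun _ hx => hL (hsub (mem_image_of_mem f hx))⟩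

theorem monotoneOn_neg_half_log_one_sub :
    MonotoneOn (fun s : ℝ => -(1 / 2) * log (1 - s)) (Iio 1) := fun s _ t ht hst => by
  have := log_le_log (sub_pos.2 ht) (by linarith : 1 - t ≤ 1 - s)
  dsimp only
  linarith

theorem le_neg_half_log_one_sub_mul_iff {ρ s c : ℝ} (hρ : 0 < ρ) (hs : ρ * s < 1) :
    c ≤ -(1 / 2) * log (1 - ρ * s) ↔ 1 / ρ * (1 - exp (-(2 * c))) ≤ s := by
  rw [one_div_mul_eq_div, div_le_iff₀' hρ, ← sub_le_comm, ← log_le_iff_le_exp (by linarith)]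
  constructor <;> intro h <;> linarith

theorem one_div_mul_one_sub_exp_mem_Ico {ρ c : ℝ} (hρ : 0 < ρ) (hρ1 : ρ < 1)
    (hc : 1 / 2 * log (1 - ρ) < c) (hc0 : c ≤ 0) : 1 / ρ * (1 - exp (2 * c)) ∈ Ico 0 1 := by
  refine ⟨mul_nonneg (by positivity) (sub_nonneg.2 (exp_le_one_iff.2 (by linarith))), ?_⟩
  rw [one_div_mul_eq_div, div_lt_one hρ, sub_lt_comm, ← exp_log (sub_pos.2 hρ1)]
  exact exp_lt_exp.2 (by linarith)

/-- Classification-limited branch of the Gaussian rate-distortion-classification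
function, in finite-dimensional parametric form: the infimum of the rate over admissible
Gaussian reconstruction parameters equals
`-(1/2) * log (1 - (1/ρ²) * (1 - exp (2*(C - h))))` where `ρ² = θ₁²/(σS²·σX²)`. -/
theorem gaussian_RDC_classification_limited_branch
    (σX σS θ₁ h μX : ℝ) (hσX : 0 < σX) (hσS : 0 < σS) (hθ₁ : θ₁ ≠ 0)
    (hcorr : θ₁ ^ 2 < σS ^ 2 * σX ^ 2)
    (C D : ℝ)
    (hClow : h + 1 / 2 * Real.log (1 - θ₁ ^ 2 / (σS ^ 2 * σX ^ 2)) < C) (hChigh : C ≤ h)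
    (hDC : D ≥ σX ^ 2 - σS ^ 2 * σX ^ 4 / θ₁ ^ 2 * (1 - Real.exp (2 * (C - h)))) :
    IsGLB
      { r : ℝ | ∃ μhat σhat θ₂ : ℝ, 0 < σhat ∧ θ₂ ^ 2 < σX ^ 2 * σhat ^ 2 ∧
          (μX - μhat) ^ 2 + σX ^ 2 + σhat ^ 2 - 2 * θ₂ ≤ D ∧
          -(1 / 2) * Real.log (1 - θ₁ ^ 2 / (σS ^ 2 * σX ^ 4) * (θ₂ ^ 2 / σhat ^ 2)) ≥ h - C ∧
          r = -(1 / 2) * Real.log (1 - θ₂ ^ 2 / (σX ^ 2 * σhat ^ 2)) }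
      (-(1 / 2) *
        Real.log (1 - 1 / (θ₁ ^ 2 / (σS ^ 2 * σX ^ 2)) * (1 - Real.exp (2 * (C - h))))) := by
  set ρ := θ₁ ^ 2 / (σS ^ 2 * σX ^ 2)
  set q := 1 / ρ * (1 - exp (2 * (C - h)))
  have hρ : 0 < ρ := by positivity
  have hρ1 : ρ < 1 := (div_lt_one (by positivity)).2 hcorr
  obtain ⟨hq0, hq1⟩ : q ∈ Ico 0 1 :=
    one_div_mul_one_sub_exp_mem_Ico hρ hρ1 (by linarith) (by linarith)
  have hD : σX ^ 2 * (1 - q) ≤ D := by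
    convert hDC.le using 1
    simp only [q, ρ]
    field_simp
  have hmarkov (θ₂ σhat : ℝ) : θ₁ ^ 2 / (σS ^ 2 * σX ^ 4) * (θ₂ ^ 2 / σhat ^ 2) =
      ρ * (θ₂ ^ 2 / (σX ^ 2 * σhat ^ 2)) := by ring
  have hclass {s : ℝ} (hs0 : 0 ≤ s) (hs1 : s < 1) :
      h - C ≤ -(1 / 2) * log (1 - ρ * s) ↔ q ≤ s := by
    rw [le_neg_half_log_one_sub_mul_iff hρ (by nlinarith), neg_mul_eq_mul_neg, neg_sub]
  have hcont : ContinuousAt (fun s : ℝ => -(1 / 2) * log (1 - s)) q :=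
    ((continuousAt_id.const_sub 1).log (sub_pos.2 hq1).ne').const_mul _
  refine isGLB_of_image_Ioo_subset (f := fun s ↦ -(1 / 2) * log (1 - s)) hq1
    hcont.continuousWithinAt ?_ ?_
  · rintro _ ⟨μhat, σhat, θ₂, hσhat, hθ₂, -, hcls, rfl⟩
    have hs1 : θ₂ ^ 2 / (σX ^ 2 * σhat ^ 2) < 1 := (div_lt_one (by positivity)).2 hθ₂
    rw [hmarkov, ge_iff_le, hclass (by positivity) hs1] at hcls
    exact monotoneOn_neg_half_log_one_sub hq1 hs1 hcls
  · rintro _ ⟨s, ⟨hqs, hs1⟩, rfl⟩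
    have hs0 : 0 < s := hq0.trans_lt hqs
    have hσhat : (σX * √s) ^ 2 = σX ^ 2 * s := by rw [mul_pow, sq_sqrt hs0.le]
    have hcorr_eq : (σX ^ 2 * s) ^ 2 / (σX ^ 2 * (σX * √s) ^ 2) = s := by
      rw [hσhat]; field_simp
    refine ⟨μX, σX * √s, σX ^ 2 * s, by positivity, ?_, by nlinarith, ?_, by rw [hcorr_eq]⟩
    · rw [hσhat]; nlinarith [mul_pos (pow_pos hσX 4) (mul_pos hs0 (sub_pos.2 hs1))]
    · rw [hmarkov, hcorr_eq, ge_iff_le, hclass hs0.le hs1]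
      exact hqs.le
end

section
/- Fix real numbers σ_X > 0, σ_S > 0, θ₁ ≠ 0 with θ₁² < σ_S²·σ_X², a real number h, and a real number μ_X. Write ρ² = θ₁²/(σ_S²·σ_X²). Let R > 0 and let C be a real number with C ≥ h + (1/2)·log(1 − ρ²·(1 − exp(−2·R))). Then the infimum, over all triples (μ̂ ∈ ℝ, σ̂ > 0, θ₂ ∈ ℝ) satisfying θ₂² < σ_X²·σ̂², −(1/2)·log(1 − θ₂²/(σ_X²·σ̂²)) ≤ R, and −(1/2)·log(1 − (θ₁²/(σ_S²·σ_X⁴))·(θ₂²/σ̂²)) ≥ h − C, of the distortion (μ_X − μ̂)² + σ_X² + σ̂² − 2·θ₂, equals σ_X²·exp(−2·R); moreover this infimum is attained (at μ̂ = μ_X, σ̂² = θ₂ = σ_X²·(1 − exp(−2·R))). -/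
/-!
A rate budget `R` forces the squared correlation `θ₂² / (σX² σ̂²)` below `1 - exp (-2R)`, and then
AM-GM gives `2 θ₂ ≤ σX² (1 - exp (-2R)) + σ̂²`, so the distortion is at least `σX² exp (-2R)`.
Equality holds at `μ̂ = μX`, `σ̂² = θ₂ = σX² (1 - exp (-2R))`, where the rate constraint is tight
and the classification constraint is exactly the hypothesis on `C`.
-/

open Real

lemma neg_half_log_one_sub_le_iff {q R : ℝ} (hq : q < 1) :
    -(1 / 2) * log (1 - q) ≤ R ↔ q ≤ 1 - exp (-2 * R) := by
  have hlog : -(1 / 2) * log (1 - q) ≤ R ↔ -2 * R ≤ log (1 - q) := by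
    constructor <;> intro <;> linarith
  rw [hlog, le_log_iff_exp_le (by linarith)]
  constructor <;> intro <;> linarith

lemma exp_neg_two_mul_le_distortion {μX μhat σX σhat θ₂ R : ℝ} (hσX : 0 < σX) (hσhat : 0 < σhat)
    (hR : 0 ≤ R) (hlt : θ₂ ^ 2 < σX ^ 2 * σhat ^ 2)
    (hrate : -(1 / 2) * log (1 - θ₂ ^ 2 / (σX ^ 2 * σhat ^ 2)) ≤ R) :
    σX ^ 2 * exp (-2 * R) ≤ (μX - μhat) ^ 2 + σX ^ 2 + σhat ^ 2 - 2 * θ₂ := by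
  have hden : 0 < σX ^ 2 * σhat ^ 2 := by positivity
  have hcorr : θ₂ ^ 2 ≤ σX ^ 2 * (1 - exp (-2 * R)) * σhat ^ 2 := by
    have := (neg_half_log_one_sub_le_iff ((div_lt_one hden).mpr hlt)).mp hrate
    rw [div_le_iff₀ hden] at this
    linarith
  have hexp : exp (-2 * R) ≤ 1 := exp_le_one_iff.mpr (by linarith)
  have hamgm := two_mul_le_add_of_sq_le_mul (by nlinarith) (sq_nonneg σhat) hcorr
  nlinarith [sq_nonneg (μX - μhat)]

theorem gaussian_DCR_rate_active_branch_general
    (σX σS θ₁ h μX : ℝ) (hσX : 0 < σX)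
    (R C : ℝ) (hR : 0 < R)
    (hC : C ≥ h + 1 / 2 *
      Real.log (1 - θ₁ ^ 2 / (σS ^ 2 * σX ^ 2) * (1 - Real.exp (-2 * R)))) :
    IsLeast
      { d : ℝ | ∃ μhat σhat θ₂ : ℝ, 0 < σhat ∧ θ₂ ^ 2 < σX ^ 2 * σhat ^ 2 ∧
          -(1 / 2) * Real.log (1 - θ₂ ^ 2 / (σX ^ 2 * σhat ^ 2)) ≤ R ∧
          -(1 / 2) * Real.log (1 - θ₁ ^ 2 / (σS ^ 2 * σX ^ 4) * (θ₂ ^ 2 / σhat ^ 2)) ≥ h - C ∧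
          d = (μX - μhat) ^ 2 + σX ^ 2 + σhat ^ 2 - 2 * θ₂ }
      (σX ^ 2 * Real.exp (-2 * R)) := by
  set a := 1 - exp (-2 * R) with ha
  have ha0 : 0 < a := by simpa [ha] using exp_lt_one_iff.mpr (by linarith : -2 * R < 0)
  have ha1 : a < 1 := by simpa [ha] using exp_pos (-2 * R)
  have hσhat : (σX * √a) ^ 2 = σX ^ 2 * a := by rw [mul_pow, sq_sqrt ha0.le]
  have hcorr_opt : (σX ^ 2 * a) ^ 2 / (σX ^ 2 * (σX * √a) ^ 2) = a := by
    rw [hσhat]; field_simp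
  refine ⟨⟨μX, σX * √a, σX ^ 2 * a, by positivity, ?_, ?_, ?_, ?_⟩, ?_⟩
  · rwa [← div_lt_one (by positivity), hcorr_opt]
  · rw [neg_half_log_one_sub_le_iff (by rwa [hcorr_opt]), hcorr_opt]
  · have hclass : θ₁ ^ 2 / (σS ^ 2 * σX ^ 4) * ((σX ^ 2 * a) ^ 2 / (σX * √a) ^ 2)
        = θ₁ ^ 2 / (σS ^ 2 * σX ^ 2) * a := by
      rw [hσhat]; field_simp
    rw [hclass]; linarith
  · rw [hσhat]; ring
  · rintro d ⟨μhat, σhat, θ₂, hσhat, hlt, hrate, -, rfl⟩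
    exact exp_neg_two_mul_le_distortion hσX hσhat hR.le hlt hrate

/-- Rate-active branch of the Gaussian distortion-classification-rate function `D(C,R)`
(Theorem 2), in finite-dimensional parametric form: the infimum of the distortion over
admissible Gaussian reconstruction parameters equals `σX^2 * exp (-2*R)`, attained. -/
theorem gaussian_DCR_rate_active_branch
    (σX σS θ₁ h μX : ℝ) (hσX : 0 < σX) (hσS : 0 < σS) (hθ₁ : θ₁ ≠ 0)
    (hcorr : θ₁ ^ 2 < σS ^ 2 * σX ^ 2)
    (R C : ℝ) (hR : 0 < R)
    (hC : C ≥ h + 1 / 2 *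
      Real.log (1 - θ₁ ^ 2 / (σS ^ 2 * σX ^ 2) * (1 - Real.exp (-2 * R)))) :
    IsLeast
      { d : ℝ | ∃ μhat σhat θ₂ : ℝ, 0 < σhat ∧ θ₂ ^ 2 < σX ^ 2 * σhat ^ 2 ∧
          -(1 / 2) * Real.log (1 - θ₂ ^ 2 / (σX ^ 2 * σhat ^ 2)) ≤ R ∧
          -(1 / 2) * Real.log (1 - θ₁ ^ 2 / (σS ^ 2 * σX ^ 4) * (θ₂ ^ 2 / σhat ^ 2)) ≥ h - C ∧
          d = (μX - μhat) ^ 2 + σX ^ 2 + σhat ^ 2 - 2 * θ₂ }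
      (σX ^ 2 * Real.exp (-2 * R)) :=
  gaussian_DCR_rate_active_branch_general σX σS θ₁ h μX hσX R C hR hC
end

section
/- Let σ_X > 0, σ̂ > 0, θ₂ ∈ ℝ with θ₂² < σ_X²·σ̂², and let D be a real number with 0 < D ≤ σ_X². If σ_X² + σ̂² − 2·θ₂ ≤ D, then −(1/2)·log(1 − θ₂²/(σ_X²·σ̂²)) ≥ (1/2)·log(σ_X²/D). -/
open Real

/-! The distortion constraint forces `θ₂ ≥ (σX² + σ̂² - D) / 2 ≥ 0`, and AM-GM turns this into
`(σX² - D) σ̂² ≤ θ₂²`, i.e. `1 - ρ² ≤ D / σX²` for the squared correlation `ρ² = θ₂² / (σX² σ̂²)`.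
Taking `-(1/2) log` of both sides gives the bound. -/

lemma sub_mul_le_sq_of_add_sub_two_mul_le {a b D t : ℝ} (hb : 0 ≤ b) (hDa : D ≤ a)
    (h : a + b - 2 * t ≤ D) : (a - D) * b ≤ t ^ 2 := by
  nlinarith [sq_nonneg (a - D - b)]

lemma one_sub_sq_div_mul_le_div {a b D t : ℝ} (hab : 0 < a * b) (hb : 0 ≤ b) (hDa : D ≤ a)
    (h : a + b - 2 * t ≤ D) : 1 - t ^ 2 / (a * b) ≤ D / a := by
  have hb' : b ≠ 0 := right_ne_zero_of_mul hab.ne'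
  rw [← mul_div_mul_right D a hb', sub_le_iff_le_add, ← add_div, le_div_iff₀ hab]
  linarith [sub_mul_le_sq_of_add_sub_two_mul_le hb hDa h]

theorem gaussian_rate_distortion_converse_general
    (σX σhat θ₂ D : ℝ)
    (hθ₂ : θ₂ ^ 2 < σX ^ 2 * σhat ^ 2) (hDX : D ≤ σX ^ 2)
    (hdist : σX ^ 2 + σhat ^ 2 - 2 * θ₂ ≤ D) :
    -(1 / 2) * Real.log (1 - θ₂ ^ 2 / (σX ^ 2 * σhat ^ 2)) ≥ 1 / 2 * Real.log (σX ^ 2 / D) := by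
  have hprod : 0 < σX ^ 2 * σhat ^ 2 := (sq_nonneg θ₂).trans_lt hθ₂
  have hpos : 0 < 1 - θ₂ ^ 2 / (σX ^ 2 * σhat ^ 2) := by
    rwa [sub_pos, div_lt_one hprod]
  have hlog := log_le_log hpos (one_sub_sq_div_mul_le_div hprod (sq_nonneg σhat) hDX hdist)
  rw [← inv_div (σX ^ 2) D, log_inv] at hlog
  linarith

/-- Converse step in the Gaussian rate-distortion analysis, in reduced parametric form:
achieving distortion at most `D ≤ σX^2` forces the mutual information to be at least the
Shannon rate-distortion value `(1/2) * log (σX^2 / D)`. -/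
theorem gaussian_rate_distortion_converse
    (σX σhat θ₂ D : ℝ) (hσX : 0 < σX) (hσhat : 0 < σhat)
    (hθ₂ : θ₂ ^ 2 < σX ^ 2 * σhat ^ 2) (hD0 : 0 < D) (hDX : D ≤ σX ^ 2)
    (hdist : σX ^ 2 + σhat ^ 2 - 2 * θ₂ ≤ D) :
    -(1 / 2) * Real.log (1 - θ₂ ^ 2 / (σX ^ 2 * σhat ^ 2)) ≥ 1 / 2 * Real.log (σX ^ 2 / D) :=
  gaussian_rate_distortion_converse_general σX σhat θ₂ D hθ₂ hDX hdist
end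

section
/- Let σ_X > 0, σ̂ > 0, and let D₁, D₃, D_b be real numbers with σ_X² + σ̂² − D₃ ≥ 0, D₁ ≤ σ_X² − (σ_X² + σ̂² − D₃)²/(4·σ̂²), and D_b ≤ 2·D₁. Then D₃ − D_b ≥ σ_X² + σ̂² − 2·σ̂·√(σ_X² − D₁) − 2·D₁. -/
open Real

theorem le_mul_sqrt_of_sq_div_sq_le {a b c : ℝ} (hc : 0 < c) (h : a ^ 2 / c ^ 2 ≤ b) :
    a ≤ c * √b := by
  have hquot : a / c ≤ √b :=
    (le_abs_self _).trans (Real.abs_le_sqrt (by rwa [div_pow]))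
  calc a = c * (a / c) := (mul_div_cancel₀ a hc.ne').symm
    _ ≤ c * √b := mul_le_mul_of_nonneg_left hquot hc.le

theorem distortion_gap_lower_bound_general
    (σX σhat D₁ D₃ Db : ℝ) (hσhat : 0 < σhat)
    (h₂ : D₁ ≤ σX ^ 2 - (σX ^ 2 + σhat ^ 2 - D₃) ^ 2 / (4 * σhat ^ 2))
    (h₃ : Db ≤ 2 * D₁) :
    D₃ - Db ≥ σX ^ 2 + σhat ^ 2 - 2 * σhat * Real.sqrt (σX ^ 2 - D₁) - 2 * D₁ := by
  have hgap : σX ^ 2 + σhat ^ 2 - D₃ ≤ 2 * σhat * √(σX ^ 2 - D₁) :=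
    le_mul_sqrt_of_sq_div_sq_le (by positivity) <| by
      rw [mul_pow, show (2 : ℝ) ^ 2 = 4 by norm_num]
      linarith
  linarith

/-- Distortion-gap lower bound of Theorem 5. -/
theorem distortion_gap_lower_bound
    (σX σhat D₁ D₃ Db : ℝ) (hσX : 0 < σX) (hσhat : 0 < σhat)
    (h₁ : σX ^ 2 + σhat ^ 2 - D₃ ≥ 0)
    (h₂ : D₁ ≤ σX ^ 2 - (σX ^ 2 + σhat ^ 2 - D₃) ^ 2 / (4 * σhat ^ 2))
    (h₃ : Db ≤ 2 * D₁) :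
    D₃ - Db ≥ σX ^ 2 + σhat ^ 2 - 2 * σhat * Real.sqrt (σX ^ 2 - D₁) - 2 * D₁ :=
  distortion_gap_lower_bound_general σX σhat D₁ D₃ Db hσhat h₂ h₃
end

section
/- Let σ_X > 0, σ̂ > 0, and let D₁, D₃, D_b be real numbers with σ_X² + σ̂² − D₃ ≥ 0, D₁ ≤ σ_X² − (σ_X² + σ̂² − D₃)²/(4·σ̂²), 0 < D_b ≤ 2·D₁, and D₃ ≥ 0. Then D₃/D_b ≥ (σ_X² + σ̂² − 2·σ̂·√(σ_X² − D₁))/(2·D₁). -/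
open Real

/-
The hypothesis on `D₁` rearranges to `(σX² + σ̂² - D₃)² ≤ (2σ̂)² (σX² - D₁)`, so taking square roots
`σX² + σ̂² - 2σ̂√(σX² - D₁) ≤ D₃`. Dividing this by `2D₁ ≥ Db > 0` rather than by `Db` can only
shrink the left side once the right side `D₃` is nonnegative.
-/

theorem abs_le_mul_sqrt_of_sq_le_sq_mul {x c t : ℝ} (hc : 0 ≤ c) (h : x ^ 2 ≤ c ^ 2 * t) :
    |x| ≤ c * √t := by
  calc |x| ≤ √(c ^ 2 * t) := Real.abs_le_sqrt h
    _ = c * √t := by rw [Real.sqrt_mul (sq_nonneg c), Real.sqrt_sq hc]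

theorem sq_le_sq_mul_of_le_sub_sq_div {x c a b : ℝ} (hc : 0 < c) (h : b ≤ a - x ^ 2 / c ^ 2) :
    x ^ 2 ≤ c ^ 2 * (a - b) := by
  rw [le_sub_comm, div_le_iff₀ (by positivity)] at h
  linarith

theorem distortion_ratio_lower_bound_general
    (σX σhat D₁ D₃ Db : ℝ) (hσhat : 0 < σhat)
    (h₂ : D₁ ≤ σX ^ 2 - (σX ^ 2 + σhat ^ 2 - D₃) ^ 2 / (4 * σhat ^ 2))
    (h₃ : 0 < Db) (h₄ : Db ≤ 2 * D₁) (h₅ : D₃ ≥ 0) :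
    D₃ / Db ≥ (σX ^ 2 + σhat ^ 2 - 2 * σhat * Real.sqrt (σX ^ 2 - D₁)) / (2 * D₁) := by
  have hsq : (σX ^ 2 + σhat ^ 2 - D₃) ^ 2 ≤ (2 * σhat) ^ 2 * (σX ^ 2 - D₁) := by
    refine sq_le_sq_mul_of_le_sub_sq_div (by positivity) ?_
    rwa [mul_pow, show (2 : ℝ) ^ 2 = 4 by norm_num]
  have hnum : σX ^ 2 + σhat ^ 2 - 2 * σhat * √(σX ^ 2 - D₁) ≤ D₃ := by
    have := (le_abs_self _).trans (abs_le_mul_sqrt_of_sq_le_sq_mul (by positivity) hsq)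
    linarith
  exact div_le_div₀ h₅ hnum h₃ h₄

/-- Distortion-ratio lower bound of Theorem 5. -/
theorem distortion_ratio_lower_bound
    (σX σhat D₁ D₃ Db : ℝ) (hσX : 0 < σX) (hσhat : 0 < σhat)
    (h₁ : σX ^ 2 + σhat ^ 2 - D₃ ≥ 0)
    (h₂ : D₁ ≤ σX ^ 2 - (σX ^ 2 + σhat ^ 2 - D₃) ^ 2 / (4 * σhat ^ 2))
    (h₃ : 0 < Db) (h₄ : Db ≤ 2 * D₁) (h₅ : D₃ ≥ 0) :
    D₃ / Db ≥ (σX ^ 2 + σhat ^ 2 - 2 * σhat * Real.sqrt (σX ^ 2 - D₁)) / (2 * D₁) :=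
  distortion_ratio_lower_bound_general σX σhat D₁ D₃ Db hσhat h₂ h₃ h₄ h₅
end
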